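/- The closed convex hull of V̄ is exactly {(v, z) ∈ ℝ^m × [0,1]^{m×ℓ} : z_{i,j+1} ≤ z_{ij} for all i ∈ [m], j ∈ [ℓ−1]}. In particular, no inequality relating the continuous variables v to the binary variables z is valid for conv(V̄) beyond the ordering constraints on z. -/

import Mathlib

/-!
Each row `(v_i, z_i)` of a point of `V̄` lies in the one-row set `Ū`, so the closed convex hull of
`V̄` is the product of `m` copies of that of `Ū`. Membership in `Ū` forces `z` to be a staircase
`(1, …, 1, 0, …, 0)` with `k` ones and `v ∈ [b_{k-1}, b_k]`. The staircases with `k = ℓ` and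
`k = 0` allow `v` to be arbitrarily large, resp. small, so the closed convex hull of `Ū` is
invariant under translation in `v`. It therefore contains `ℝ × {staircase}` for every
staircase, hence `ℝ × conv(staircases)`, and the convex hull of the staircases is the polytope
`1 ≥ z_0 ≥ z_1 ≥ ⋯ ≥ z_{ℓ-1} ≥ 0`.
-/

open Set

/-- The set `V̄ ⊆ ℝ^m × {0,1}^{m×ℓ}`. -/
def Vbar (m ℓ : ℕ) (b : Fin ℓ → ℝ) : Set ((Fin m → ℝ) × (Fin m → Fin ℓ → ℝ)) :=
  {vz | (∀ i j, vz.2 i j = 0 ∨ vz.2 i j = 1) ∧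
    ∀ i j, 0 ≤ (vz.1 i - b j) * vz.2 i j ∧ (vz.1 i - b j) * (1 - vz.2 i j) ≤ 0}

theorem Convex.add_mem_of_forall_add_smul_mem {E : Type*} [AddCommGroup E] [Module ℝ E]
    [TopologicalSpace E] [ContinuousAdd E] [ContinuousSMul ℝ E] {C : Set E}
    (hC : Convex ℝ C) (hCc : IsClosed C) {x y d : E} (hx : x ∈ C)
    (hy : ∀ t : ℝ, 0 ≤ t → y + t • d ∈ C) : x + d ∈ C := by
  have hseg : openSegment ℝ (x + d) (y + d) ⊆ C := by
    rintro _ ⟨a, c, ha, hc, hac, rfl⟩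
    -- `a • (x + d) + c • (y + d) = a • x + c • (y + c⁻¹ • d)`, and `y + c⁻¹ • d` lies on the ray.
    convert hC hx (hy c⁻¹ (inv_nonneg.2 hc.le)) ha.le hc.le hac using 1
    rw [smul_add c y (c⁻¹ • d), smul_smul, mul_inv_cancel₀ hc.ne', one_smul]
    linear_combination (norm := module) hac • d
  exact hCc.closure_subset_iff.2 hseg (segment_subset_closure_openSegment (left_mem_segment ℝ _ _))

def prodPiEquiv (R ι E F : Type*) [Semiring R] [AddCommMonoid E] [Module R E]
    [TopologicalSpace E] [AddCommMonoid F] [Module R F] [TopologicalSpace F] :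
    ((ι → E) × (ι → F)) ≃L[R] (ι → E × F) where
  toFun p i := (p.1 i, p.2 i)
  invFun f := (fun i => (f i).1, fun i => (f i).2)
  map_add' _ _ := rfl
  map_smul' _ _ := rfl
  left_inv _ := rfl
  right_inv _ := rfl
  continuous_toFun := by fun_prop
  continuous_invFun := by fun_prop

theorem ContinuousLinearEquiv.closure_convexHull_preimage {E F : Type*} [AddCommGroup E]
    [Module ℝ E] [TopologicalSpace E] [AddCommGroup F] [Module ℝ F] [TopologicalSpace F]
    (e : E ≃L[ℝ] F) (s : Set F) :
    closure (convexHull ℝ (e ⁻¹' s)) = e ⁻¹' closure (convexHull ℝ s) := by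
  rw [e.preimage_closure, ← e.image_symm_eq_preimage, ← e.image_symm_eq_preimage]
  exact congrArg closure (e.symm.toLinearMap.image_convexHull s).symm

def orderSimplex (ℓ : ℕ) : Set (Fin ℓ → ℝ) :=
  {z | (∀ j, z j ∈ Icc (0 : ℝ) 1) ∧
    ∀ j : Fin ℓ, ∀ h : (j : ℕ) + 1 < ℓ, z ⟨(j : ℕ) + 1, h⟩ ≤ z j}

def staircase (ℓ k : ℕ) (j : Fin ℓ) : ℝ := if (j : ℕ) < k then 1 else 0

theorem convex_orderSimplex (ℓ : ℕ) : Convex ℝ (orderSimplex ℓ) := by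
  rintro z ⟨hz, hz'⟩ y ⟨hy, hy'⟩ a c ha hc hac
  simp only [orderSimplex, mem_ofPred_eq, mem_Icc, Pi.add_apply, Pi.smul_apply, smul_eq_mul]
  refine ⟨fun j => ⟨?_, ?_⟩, fun j h => ?_⟩
  · nlinarith [(hz j).1, (hy j).1]
  · nlinarith [(hz j).2, (hy j).2]
  · nlinarith [hz' j h, hy' j h]

theorem isClosed_orderSimplex (ℓ : ℕ) : IsClosed (orderSimplex ℓ) := by
  simp only [orderSimplex, ofPred_and, ofPred_forall]
  exact (isClosed_iInter fun j => isClosed_Icc.preimage (continuous_apply j)).inter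
    (isClosed_iInter fun j => isClosed_iInter fun h =>
      isClosed_le (continuous_apply _) (continuous_apply _))

theorem orderSimplex_subset_convexHull_staircase (ℓ : ℕ) :
    orderSimplex ℓ ⊆ convexHull ℝ (range (staircase ℓ)) := by
  rintro z ⟨hz, hz'⟩
  let ζ : ℕ → ℝ
    | 0 => 1
    | k + 1 => if h : k < ℓ then z ⟨k, h⟩ else 0
  have hζ : Antitone ζ := antitone_nat_of_succ_le fun k => by
    rcases k with _ | k
    · dsimp only [ζ]
      split_ifs
      exacts [(hz _).2, zero_le_one]
    · dsimp only [ζ]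
      split_ifs with h₁ h₀
      · exact hz' ⟨k, h₀⟩ h₁
      · omega
      · exact (hz _).1
      · exact le_rfl
  have hζ_succ (j : Fin ℓ) : ζ (j + 1) = z j := by simp [ζ]
  have hζ_top : ζ (ℓ + 1) = 0 := by simp [ζ]
  have hcoord (j : Fin ℓ) :
      ∑ k ∈ Finset.range (ℓ + 1), (ζ k - ζ (k + 1)) * staircase ℓ k j = z j := by
    -- the `k`-th term is `ζ k - ζ (k + 1)` for `j < k` and `0` otherwise, so it telescopes as:
    let g k := ζ (max k (j + 1))
    calc _ = ∑ k ∈ Finset.range (ℓ + 1), (g k - g (k + 1)) := by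
          refine Finset.sum_congr rfl fun k _ => ?_
          simp only [staircase, g]
          split_ifs with h
          · rw [mul_one, max_eq_left (by omega), max_eq_left (by omega)]
          · rw [mul_zero, max_eq_right (by omega), max_eq_right (by omega), sub_self]
      _ = z j := by
          rw [Finset.sum_range_sub']
          simp only [g]
          rw [max_eq_right (by omega), max_eq_left (by omega), hζ_succ,
            hζ_top, sub_zero]
  have hz_eq : z = ∑ k ∈ Finset.range (ℓ + 1), (ζ k - ζ (k + 1)) • staircase ℓ k := by
    ext j
    simp only [Finset.sum_apply, Pi.smul_apply, smul_eq_mul, hcoord]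
  rw [hz_eq]
  refine (convex_convexHull ℝ _).sum_mem (fun k _ => sub_nonneg.2 (hζ k.le_succ)) ?_
    fun k _ => subset_convexHull ℝ _ (mem_range_self k)
  rw [Finset.sum_range_sub', hζ_top, sub_zero]

def Ubar (ℓ : ℕ) (b : Fin ℓ → ℝ) : Set (ℝ × (Fin ℓ → ℝ)) :=
  {p | (∀ j, p.2 j = 0 ∨ p.2 j = 1) ∧
    ∀ j, 0 ≤ (p.1 - b j) * p.2 j ∧ (p.1 - b j) * (1 - p.2 j) ≤ 0}

section Ubar

variable {ℓ : ℕ} {b : Fin ℓ → ℝ}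

theorem Ubar_subset_univ_prod_orderSimplex (hb : StrictMono b) :
    Ubar ℓ b ⊆ univ ×ˢ orderSimplex ℓ := by
  rintro ⟨v, z⟩ ⟨hz, hv⟩
  dsimp only at hz hv
  refine ⟨trivial, fun j => ?_, fun j h => ?_⟩
  · rcases hz j with h | h <;> simp [h]
  · have hbj : b j < b ⟨j + 1, h⟩ := hb (Fin.mk_lt_mk.2 (Nat.lt_succ_self j))
    -- `z j = 0` and `z (j + 1) = 1` would force `b (j + 1) ≤ v ≤ b j`.
    have hlo := (hv ⟨j + 1, h⟩).1
    have hhi := (hv j).2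
    rcases hz ⟨j + 1, h⟩ with h1 | h1 <;> rcases hz j with h0 | h0 <;>
      simp only [h0, h1] at hlo hhi ⊢ <;> linarith

theorem mk_staircase_mem_Ubar {k : ℕ} {t : ℝ}
    (hlo : ∀ j : Fin ℓ, (j : ℕ) < k → b j ≤ t) (hhi : ∀ j : Fin ℓ, k ≤ (j : ℕ) → t ≤ b j) :
    (t, staircase ℓ k) ∈ Ubar ℓ b := by
  refine ⟨fun j => ?_, fun j => ?_⟩ <;> dsimp only [staircase]
  · split_ifs <;> simp
  · split_ifs with h
    · simpa using hlo j h
    · simpa using hhi j (not_lt.1 h)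

theorem add_fst_mem_closure_convexHull_Ubar (hℓ : 1 ≤ ℓ)
    (hb : Monotone b) {x : ℝ × (Fin ℓ → ℝ)} (hx : x ∈ closure (convexHull ℝ (Ubar ℓ b)))
    (s : ℝ) : x + (s, 0) ∈ closure (convexHull ℝ (Ubar ℓ b)) := by
  have hray {k : ℕ} {t : ℝ} (hlo : ∀ j : Fin ℓ, (j : ℕ) < k → b j ≤ t)
      (hhi : ∀ j : Fin ℓ, k ≤ (j : ℕ) → t ≤ b j) :
      (t, staircase ℓ k) ∈ closure (convexHull ℝ (Ubar ℓ b)) :=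
    subset_closure (subset_convexHull ℝ _ (mk_staircase_mem_Ubar hlo hhi))
  have hC := (convex_convexHull ℝ (Ubar ℓ b)).closure
  rcases le_total 0 s with hs | hs
  · refine hC.add_mem_of_forall_add_smul_mem isClosed_closure hx
      (y := (b ⟨ℓ - 1, by omega⟩, staircase ℓ ℓ)) fun t ht => ?_
    simpa using hray (k := ℓ) (fun j _ => le_add_of_le_of_nonneg (hb (Fin.mk_le_mk.2 (by omega)))
      (mul_nonneg ht hs)) (fun j hj => absurd j.isLt (by omega))
  · refine hC.add_mem_of_forall_add_smul_mem isClosed_closure hx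
      (y := (b ⟨0, by omega⟩, staircase ℓ 0)) fun t ht => ?_
    simpa using hray (k := 0) (fun j hj => absurd hj (Nat.not_lt_zero _))
      (fun j _ => add_le_of_le_of_nonpos (hb (Fin.mk_le_mk.2 (by omega)))
        (mul_nonpos_of_nonneg_of_nonpos ht hs))

theorem univ_prod_range_staircase_subset (hℓ : 1 ≤ ℓ)
    (hb : Monotone b) :
    univ ×ˢ range (staircase ℓ) ⊆ closure (convexHull ℝ (Ubar ℓ b)) := by
  rintro ⟨v, _⟩ ⟨-, k, rfl⟩
  let j₀ : Fin ℓ := ⟨min (k - 1) (ℓ - 1), by omega⟩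
  have h : (b j₀, staircase ℓ k) ∈ Ubar ℓ b :=
    mk_staircase_mem_Ubar (fun j hj => hb (Fin.le_def.2 (by dsimp only [j₀]; omega)))
      (fun j hj => hb (Fin.le_def.2 (by dsimp only [j₀]; omega)))
  simpa using add_fst_mem_closure_convexHull_Ubar hℓ hb
    (subset_closure (subset_convexHull ℝ _ h)) (v - b j₀)

theorem closure_convexHull_Ubar (hℓ : 1 ≤ ℓ) (hb : StrictMono b) :
    closure (convexHull ℝ (Ubar ℓ b)) = univ ×ˢ orderSimplex ℓ := by
  refine (closure_minimal (convexHull_min (Ubar_subset_univ_prod_orderSimplex hb)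
    (convex_univ.prod (convex_orderSimplex ℓ)))
    (isClosed_univ.prod (isClosed_orderSimplex ℓ))).antisymm ?_
  calc univ ×ˢ orderSimplex ℓ ⊆ univ ×ˢ convexHull ℝ (range (staircase ℓ)) :=
        prod_mono subset_rfl (orderSimplex_subset_convexHull_staircase ℓ)
    _ = convexHull ℝ (univ ×ˢ range (staircase ℓ)) := by rw [convexHull_prod, convexHull_univ]
    _ ⊆ closure (convexHull ℝ (Ubar ℓ b)) :=
        convexHull_min (univ_prod_range_staircase_subset hℓ hb.monotone)
          (convex_convexHull ℝ _).closure

end Ubar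

theorem stmt6_general (m ℓ : ℕ) (hℓ : 1 ≤ ℓ)
    (b : Fin ℓ → ℝ) (hb : StrictMono b) :
    closure (convexHull ℝ (Vbar m ℓ b)) =
      {vz : (Fin m → ℝ) × (Fin m → Fin ℓ → ℝ) |
        (∀ i j, vz.2 i j ∈ Set.Icc (0 : ℝ) 1) ∧
        ∀ i : Fin m, ∀ j : Fin ℓ, ∀ h : (j : ℕ) + 1 < ℓ,
          vz.2 i ⟨(j : ℕ) + 1, h⟩ ≤ vz.2 i j} := by
  have hV : Vbar m ℓ b = prodPiEquiv ℝ (Fin m) ℝ (Fin ℓ → ℝ) ⁻¹' univ.pi fun _ => Ubar ℓ b := by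
    ext; simp [Vbar, Ubar, prodPiEquiv, forall_and]
  rw [hV, ContinuousLinearEquiv.closure_convexHull_preimage, convexHull_pi, closure_pi_set]
  simp only [closure_convexHull_Ubar hℓ hb]
  ext
  simp [prodPiEquiv, orderSimplex, forall_and]

/-- `cl conv(V̄) = {(v, z) ∈ ℝ^m × [0,1]^{m×ℓ} : z_{i,j+1} ≤ z_{ij} ∀ i ∈ [m], j ∈ [ℓ−1]}`. -/
theorem stmt6 (m ℓ : ℕ) (hm : 1 ≤ m) (hℓ : 1 ≤ ℓ)
    (b : Fin ℓ → ℝ) (hb : StrictMono b) :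
    closure (convexHull ℝ (Vbar m ℓ b)) =
      {vz : (Fin m → ℝ) × (Fin m → Fin ℓ → ℝ) |
        (∀ i j, vz.2 i j ∈ Set.Icc (0 : ℝ) 1) ∧
        ∀ i : Fin m, ∀ j : Fin ℓ, ∀ h : (j : ℕ) + 1 < ℓ,
          vz.2 i ⟨(j : ℕ) + 1, h⟩ ≤ vz.2 i j} :=
  stmt6_general m ℓ hℓ b hb
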